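/- arXiv:2009.00436 — 4 statements merged into one kernel-verified Lean document; each statement's English description precedes it below -/
import Mathlib

section
/- Let (Ω, ℱ, P) be a probability space, 𝒢 ⊆ ℱ a sub-σ-algebra, 𝒟 a countable type, D : Ω → 𝒟 a 𝒢-measurable map, and U : 𝒟 → Ω → ℝ a family of ℱ-measurable random variables. Fix τ ∈ ℝ and suppose rank similarity holds at level τ: for all d, d' ∈ 𝒟, E[1{U_d ≤ τ} | 𝒢] = E[1{U_{d'} ≤ τ} | 𝒢] P-almost surely. Define U_D : Ω → ℝ by U_D(ω) := U_{D(ω)}(ω). Then for every d₀ ∈ 𝒟, E[1{U_D ≤ τ} | 𝒢] = E[1{U_{d₀} ≤ τ} | 𝒢] P-almost surely. -/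
open MeasureTheory

/-- The "freezing" step in Theorem 1(i) of the IVQR model: if `D` is measurable with respect
to the conditioning σ-algebra `𝒢` and the ranks `U d` are rank-similar given `𝒢` at level `τ`,
then the realized rank `U_D` has the same conditional distribution function value at `τ` as any
fixed `U d₀`. -/
theorem ivqr_freezing
    {Ω : Type*} (𝒢 : MeasurableSpace Ω) [mΩ : MeasurableSpace Ω] (P : Measure Ω) [IsProbabilityMeasure P]
    (h𝒢 : 𝒢 ≤ mΩ)
    {𝒟 : Type*} [MeasurableSpace 𝒟] [MeasurableSingletonClass 𝒟] [Countable 𝒟]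
    (D : Ω → 𝒟) (hD : @Measurable Ω 𝒟 𝒢 _ D)
    (U : 𝒟 → Ω → ℝ) (hU : ∀ d, Measurable (U d))
    (τ : ℝ)
    (hsim : ∀ d d' : 𝒟,
      P[(fun ω => if U d ω ≤ τ then (1 : ℝ) else 0) | 𝒢]
        =ᵐ[P] P[(fun ω => if U d' ω ≤ τ then (1 : ℝ) else 0) | 𝒢])
    (d₀ : 𝒟) :
    P[(fun ω => if U (D ω) ω ≤ τ then (1 : ℝ) else 0) | 𝒢]
      =ᵐ[P] P[(fun ω => if U d₀ ω ≤ τ then (1 : ℝ) else 0) | 𝒢] := by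
  classical
  letI : MeasurableSpace Ω := mΩ
  set ind : 𝒟 → Ω → ℝ := fun d ω => if U d ω ≤ τ then (1 : ℝ) else 0 with hind
  set f : Ω → ℝ := fun ω => if U (D ω) ω ≤ τ then (1 : ℝ) else 0 with hfdef
  set g : Ω → ℝ := P[(fun ω => if U d₀ ω ≤ τ then (1 : ℝ) else 0) | 𝒢] with hgdef
  have hDset : ∀ d : 𝒟, MeasurableSet[𝒢] {ω | D ω = d} := fun d =>
    hD (measurableSet_singleton d)
  have hDsetm : ∀ d : 𝒟, MeasurableSet[mΩ] {ω | D ω = d} := fun d => h𝒢 _ (hDset d)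
  have hindm : ∀ d, Measurable[mΩ] (ind d) := fun d =>
    Measurable.ite (measurableSet_le (hU d) measurable_const) measurable_const measurable_const
  have hindint : ∀ d, Integrable (ind d) P := by
    intro d
    have hsm : AEStronglyMeasurable (ind d) P := (hindm d).aestronglyMeasurable
    refine Integrable.mono' (integrable_const (1 : ℝ)) hsm ?_
    filter_upwards with ω
    simp only [hind]
    split <;> simp
  have hTm : MeasurableSet[mΩ] {ω | U (D ω) ω ≤ τ} := by
    have h : {ω | U (D ω) ω ≤ τ} = ⋃ d, ({ω | D ω = d} ∩ {ω | U d ω ≤ τ}) := by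
      ext ω
      simp only [Set.mem_setOf_eq, Set.mem_iUnion, Set.mem_inter_iff]
      constructor
      · intro h; exact ⟨D ω, rfl, h⟩
      · rintro ⟨d, rfl, h⟩; exact h
    rw [h]
    exact MeasurableSet.iUnion fun d =>
      (hDsetm d).inter (measurableSet_le (hU d) measurable_const)
  have hfm : Measurable[mΩ] f :=
    Measurable.ite hTm measurable_const measurable_const
  have hfint : Integrable f P := by
    have hsm : AEStronglyMeasurable f P := hfm.aestronglyMeasurable
    refine Integrable.mono' (integrable_const (1 : ℝ)) hsm ?_
    filter_upwards with ω
    simp only [hfdef]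
    split <;> simp
  have key : ∀ s : Set Ω, MeasurableSet[𝒢] s → ∫ ω in s, g ω ∂P = ∫ ω in s, f ω ∂P := by
    intro s hs
    have hsm : MeasurableSet[mΩ] s := h𝒢 _ hs
    set A : 𝒟 → Set Ω := fun d => s ∩ {ω | D ω = d} with hA
    have hAm : ∀ d, MeasurableSet[mΩ] (A d) := fun d => hsm.inter (hDsetm d)
    have hA𝒢 : ∀ d, MeasurableSet[𝒢] (A d) := fun d => hs.inter (hDset d)
    have hAdisj : Pairwise (Function.onFun Disjoint A) := by
      intro d d' hdd'
      refine Set.disjoint_left.2 ?_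
      rintro ω ⟨-, h1⟩ ⟨-, h2⟩
      exact hdd' (h1.symm.trans h2)
    have hAunion : (⋃ d, A d) = s := by
      ext ω
      simp only [Set.mem_iUnion, hA, Set.mem_inter_iff, Set.mem_setOf_eq]
      constructor
      · rintro ⟨d, h, -⟩; exact h
      · intro h; exact ⟨D ω, h, rfl⟩
    have hgint : Integrable g P := integrable_condExp
    have hfsum : ∫ ω in s, f ω ∂P = ∑' d, ∫ ω in A d, f ω ∂P := by
      rw [← hAunion]
      exact MeasureTheory.integral_iUnion hAm hAdisj (hfint.integrableOn)
    have hgsum : ∫ ω in s, g ω ∂P = ∑' d, ∫ ω in A d, g ω ∂P := by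
      rw [← hAunion]
      exact MeasureTheory.integral_iUnion hAm hAdisj (hgint.integrableOn)
    rw [hfsum, hgsum]
    congr 1
    funext d
    have h1 : ∫ ω in A d, f ω ∂P = ∫ ω in A d, ind d ω ∂P := by
      refine setIntegral_congr_fun (hAm d) ?_
      intro ω hω
      have hωd : D ω = d := hω.2
      simp only [hfdef, hind, hωd]
    have h2 : ∫ ω in A d, ind d ω ∂P = ∫ ω in A d, (P[ind d | 𝒢]) ω ∂P :=
      (setIntegral_condExp h𝒢 (hindint d) (hA𝒢 d)).symm
    have h3 : ∫ ω in A d, (P[ind d | 𝒢]) ω ∂P = ∫ ω in A d, g ω ∂P :=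
      integral_congr_ae (ae_restrict_of_ae (hsim d d₀))
    rw [h1, h2, h3]
  have hmain := ae_eq_condExp_of_forall_setIntegral_eq h𝒢 hfint
    (fun s _ _ => integrable_condExp.integrableOn)
    (fun s hs _ => key s hs)
    (StronglyMeasurable.aestronglyMeasurable stronglyMeasurable_condExp)
  exact hmain.symm
end

section
/- Let (Ω, ℱ, P) be a probability space. Let X : Ω → 𝒳, Z : Ω → 𝒵, and ν : Ω → 𝒩 be measurable maps into standard Borel spaces, let 𝒟 be a countable type, let U : 𝒟 → Ω → ℝ be a family of measurable random variables, and let q : ℝ × 𝒟 × 𝒳 → ℝ be measurable. Define the potential outcomes Y_d := q(U_d, d, X) for each d ∈ 𝒟. Assume: (A1) for each d ∈ 𝒟 and each τ ∈ [0,1], E[1{U_d ≤ τ} | σ(X)] = τ P-a.s.; (A2) for each d ∈ 𝒟, U_d and Z are conditionally independent given σ(X); (A3) D : Ω → 𝒟 is measurable with respect to σ(X, Z, ν); (A4, rank similarity) for all d, d' ∈ 𝒟 and all τ ∈ [0,1], E[1{U_d ≤ τ} | σ(X, Z, ν)] = E[1{U_{d'} ≤ τ} | σ(X, Z, ν)]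 P-a.s. Define U := U_D (i.e., U(ω) = U_{D(ω)}(ω)) and Y := Y_D = q(U_D, D, X). Then Y = q(U, D, X) pointwise and, for every τ ∈ [0,1], E[1{U ≤ τ} | σ(X, Z)] = τ P-almost surely; that is, U is uniformly distributed on (0,1) conditionally on (X, Z). -/
/-!
Rank similarity (A4) says that, given `σ(X, Z, ν)`, all ranks `U d` have the same conditional
law. The selection `D` is `σ(X, Z, ν)`-measurable, so splitting along the fibres `{D = d}` shows
that the selected rank `U D` has that conditional law as well; by the tower property it then has
the same conditional law given `σ(X, Z)` as any fixed rank `U d₀`. Finally, conditional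
independence of `U d₀` and `Z` given `X` (A2) means that conditioning `U d₀` on `(X, Z)` is the
same as conditioning it on `X` alone, where it is uniform (A1).
-/

open MeasureTheory ProbabilityTheory

section

variable {Ω : Type*} {m mΩ : MeasurableSpace Ω} {μ : Measure Ω} {s s' t : Set Ω}

lemma setIntegral_indicator_one (hs : MeasurableSet s) :
    ∫ x in t, s.indicator (fun _ => (1 : ℝ)) x ∂μ = μ.real (t ∩ s) := by
  rw [setIntegral_indicator hs, setIntegral_const, smul_eq_mul, mul_one]

lemma setIntegral_eq_of_isPiSystem (hm : m ≤ mΩ) {C : Set (Set Ω)}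
    (hgen : m = MeasurableSpace.generateFrom C) (hC : IsPiSystem C) {f g : Ω → ℝ}
    (hf : Integrable f μ) (hg : Integrable g μ)
    (hbasic : ∀ t ∈ C, ∫ x in t, f x ∂μ = ∫ x in t, g x ∂μ)
    (huniv : ∫ x, f x ∂μ = ∫ x, g x ∂μ) (ht : MeasurableSet[m] t) :
    ∫ x in t, f x ∂μ = ∫ x in t, g x ∂μ := by
  induction t, ht using MeasurableSpace.induction_on_inter hgen hC with
  | empty => simp
  | basic t ht => exact hbasic t ht
  | compl t ht h =>
    rw [setIntegral_compl (hm t ht) hf, setIntegral_compl (hm t ht) hg, huniv, h]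
  | iUnion t hdisj ht h =>
    rw [integral_iUnion (fun n => hm _ (ht n)) hdisj hf.integrableOn,
      integral_iUnion (fun n => hm _ (ht n)) hdisj hg.integrableOn]
    exact tsum_congr h

lemma isPiSystem_image2_inter (m₁ m₂ : MeasurableSpace Ω) :
    IsPiSystem (Set.image2 (· ∩ ·) {s | MeasurableSet[m₁] s} {s | MeasurableSet[m₂] s}) := by
  rintro _ ⟨a, ha, b, hb, rfl⟩ _ ⟨a', ha', b', hb', rfl⟩ -
  refine ⟨a ∩ a', ha.inter ha', b ∩ b', hb.inter hb', ?_⟩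
  simp only [Set.inter_inter_inter_comm]

lemma sup_eq_generateFrom_image2_inter (m₁ m₂ : MeasurableSpace Ω) :
    m₁ ⊔ m₂ = MeasurableSpace.generateFrom
      (Set.image2 (· ∩ ·) {s | MeasurableSet[m₁] s} {s | MeasurableSet[m₂] s}) := by
  refine le_antisymm (sup_le (fun a ha => ?_) (fun b hb => ?_))
    (MeasurableSpace.generateFrom_le ?_)
  · exact MeasurableSpace.measurableSet_generateFrom ⟨a, ha, Set.univ, .univ, Set.inter_univ a⟩
  · exact MeasurableSpace.measurableSet_generateFrom ⟨Set.univ, .univ, b, hb, Set.univ_inter b⟩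
  · rintro _ ⟨a, ha, b, hb, rfl⟩
    exact (le_sup_left (b := m₂) a ha).inter (le_sup_right (a := m₁) b hb)

lemma indicator_preimage_Iic_eq_ite (f : Ω → ℝ) (τ : ℝ) :
    (f ⁻¹' Set.Iic τ).indicator (fun _ => (1 : ℝ)) = fun ω => if f ω ≤ τ then 1 else 0 := by
  ext ω; by_cases h : f ω ≤ τ <;> simp [h]

lemma measure_eq_tsum_inter_preimage_singleton {𝒟 : Type*} [Countable 𝒟] {D : Ω → 𝒟}
    (hD : ∀ d, MeasurableSet (D ⁻¹' {d})) (hs : MeasurableSet s) :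
    μ s = ∑' d, μ (s ∩ D ⁻¹' {d}) := by
  rw [← measure_iUnion ((pairwise_disjoint_fiber D).mono fun _ _ h =>
      h.mono Set.inter_subset_right Set.inter_subset_right) fun d => hs.inter (hD d),
    ← Set.inter_iUnion, Set.iUnion_eq_univ_iff.mpr fun ω => ⟨D ω, rfl⟩, Set.inter_univ]

variable [IsFiniteMeasure μ]

lemma setIntegral_condExp_indicator (hm : m ≤ mΩ) (hs : MeasurableSet s)
    (ht : MeasurableSet[m] t) : ∫ x in t, (μ⟦s | m⟧) x ∂μ = μ.real (t ∩ s) := by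
  rw [setIntegral_condExp hm ((integrable_const (1 : ℝ)).indicator hs) ht,
    setIntegral_indicator_one hs]

lemma condExp_indicator_ae_eq_iff (hm : m ≤ mΩ) (hs : MeasurableSet s)
    (hs' : MeasurableSet s') :
    μ⟦s | m⟧ =ᵐ[μ] μ⟦s' | m⟧ ↔ ∀ t, MeasurableSet[m] t → μ (t ∩ s) = μ (t ∩ s') := by
  refine ⟨fun h t ht => ?_, fun h => ?_⟩
  · rw [← measureReal_eq_measureReal_iff, ← setIntegral_condExp_indicator hm hs ht,
      ← setIntegral_condExp_indicator hm hs' ht]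
    exact setIntegral_congr_ae (hm t ht) (h.mono fun _ hx _ => hx)
  · refine ae_eq_condExp_of_forall_setIntegral_eq hm ((integrable_const (1 : ℝ)).indicator hs')
      (fun _ _ _ => integrable_condExp.integrableOn) (fun t ht _ => ?_)
      stronglyMeasurable_condExp.aestronglyMeasurable
    rw [setIntegral_condExp_indicator hm hs ht, setIntegral_indicator_one hs',
      measureReal_def, measureReal_def, h t ht]

lemma condExp_ae_eq_of_le_of_ae_eq {m₁ m₂ : MeasurableSpace Ω} (h₁₂ : m₁ ≤ m₂)
    (h₂ : m₂ ≤ mΩ) {f g : Ω → ℝ} (h : μ[f | m₂] =ᵐ[μ] μ[g | m₂]) : μ[f | m₁] =ᵐ[μ] μ[g | m₁] :=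
  calc μ[f | m₁] =ᵐ[μ] μ[μ[f | m₂] | m₁] := (condExp_condExp_of_le h₁₂ h₂).symm
    _ =ᵐ[μ] μ[μ[g | m₂] | m₁] := condExp_congr_ae h
    _ =ᵐ[μ] μ[g | m₁] := condExp_condExp_of_le h₁₂ h₂

lemma setIntegral_inter_eq_setIntegral_mul_condExp (hm : m ≤ mΩ)
    {g : Ω → ℝ} (hgm : StronglyMeasurable[m] g) (hg : Integrable g μ)
    (hs : MeasurableSet s) (ht : MeasurableSet[m] t) :
    ∫ x in t ∩ s, g x ∂μ = ∫ x in t, g x * (μ⟦s | m⟧) x ∂μ := by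
  have hmul : g * s.indicator (fun _ => (1 : ℝ)) = s.indicator g := by
    ext x; by_cases hx : x ∈ s <;> simp [hx]
  have hint : Integrable (g * s.indicator (fun _ => (1 : ℝ))) μ := hmul ▸ hg.indicator hs
  calc ∫ x in t ∩ s, g x ∂μ = ∫ x in t, (g * s.indicator (fun _ => (1 : ℝ))) x ∂μ := by
        rw [hmul, setIntegral_indicator hs]
    _ = ∫ x in t, (μ[g * s.indicator (fun _ => (1 : ℝ)) | m]) x ∂μ :=
        (setIntegral_condExp hm hint ht).symm
    _ = ∫ x in t, g x * (μ⟦s | m⟧) x ∂μ :=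
        setIntegral_congr_ae (hm t ht) <| (condExp_mul_of_stronglyMeasurable_left hgm hint
          ((integrable_const (1 : ℝ)).indicator hs)).mono fun _ hx _ => hx

theorem ProbabilityTheory.CondIndepFun.condExp_indicator_sup_comap_ae_eq [StandardBorelSpace Ω]
    {β γ : Type*} [MeasurableSpace β] [mγ : MeasurableSpace γ]
    {W : Ω → β} {Z : Ω → γ} (hm : m ≤ mΩ) (h : CondIndepFun m hm W Z μ)
    (hW : Measurable W) (hZ : Measurable Z) {A : Set β} (hA : MeasurableSet A) :
    μ⟦W ⁻¹' A | m ⊔ mγ.comap Z⟧ =ᵐ[μ] μ⟦W ⁻¹' A | m⟧ := by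
  have hS : MeasurableSet (W ⁻¹' A) := hW hA
  have hmZ : m ⊔ mγ.comap Z ≤ mΩ := sup_le hm hZ.comap_le
  refine (ae_eq_condExp_of_forall_setIntegral_eq hmZ ((integrable_const (1 : ℝ)).indicator hS)
    (fun _ _ _ => integrable_condExp.integrableOn) (fun t ht _ => ?_)
    (stronglyMeasurable_condExp.mono (le_sup_left (b := mγ.comap Z))).aestronglyMeasurable).symm
  refine setIntegral_eq_of_isPiSystem hmZ (sup_eq_generateFrom_image2_inter _ _)
    (isPiSystem_image2_inter _ _) integrable_condExp ((integrable_const (1 : ℝ)).indicator hS)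
    ?_ ?_ ht
  · rintro _ ⟨a, ha, _, ⟨B, hB, rfl⟩, rfl⟩
    have hZB : MeasurableSet (Z ⁻¹' B) := hZ hB
    calc ∫ x in a ∩ Z ⁻¹' B, (μ⟦W ⁻¹' A | m⟧) x ∂μ
        = ∫ x in a, (μ⟦W ⁻¹' A | m⟧) x * (μ⟦Z ⁻¹' B | m⟧) x ∂μ :=
          setIntegral_inter_eq_setIntegral_mul_condExp hm stronglyMeasurable_condExp
            integrable_condExp hZB ha
      _ = ∫ x in a, (μ⟦W ⁻¹' A ∩ Z ⁻¹' B | m⟧) x ∂μ :=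
          setIntegral_congr_ae (hm a ha) <|
            (((condIndepFun_iff_condExp_inter_preimage_eq_mul hW hZ).mp h A B hA hB).mono
              fun _ hx _ => hx.symm)
      _ = ∫ x in a ∩ Z ⁻¹' B, (W ⁻¹' A).indicator (fun _ => (1 : ℝ)) x ∂μ := by
          rw [setIntegral_condExp_indicator hm (hS.inter hZB) ha, setIntegral_indicator_one hS,
            Set.inter_assoc, Set.inter_comm (Z ⁻¹' B)]
  · rw [integral_condExp hm]

lemma condExp_indicator_setOf_mem_ae_eq {𝒟 : Type*} [Countable 𝒟]
    [MeasurableSpace 𝒟] [MeasurableSingletonClass 𝒟] (hm : m ≤ mΩ) {D : Ω → 𝒟}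
    (hD : Measurable[m] D) {s : 𝒟 → Set Ω} (hs : ∀ d, MeasurableSet (s d))
    (hs' : MeasurableSet s') (h : ∀ d, μ⟦s d | m⟧ =ᵐ[μ] μ⟦s' | m⟧) :
    μ⟦{ω | ω ∈ s (D ω)} | m⟧ =ᵐ[μ] μ⟦s' | m⟧ := by
  have hDm : ∀ d, MeasurableSet[m] (D ⁻¹' {d}) := fun d => hD (measurableSet_singleton d)
  have hDd : ∀ d, MeasurableSet (D ⁻¹' {d}) := fun d => hm _ (hDm d)
  have hsel : {ω | ω ∈ s (D ω)} = ⋃ d, D ⁻¹' {d} ∩ s d := by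
    ext ω; simp
  have hsel_meas : MeasurableSet {ω | ω ∈ s (D ω)} :=
    hsel ▸ .iUnion fun d => (hDd d).inter (hs d)
  rw [condExp_indicator_ae_eq_iff hm hsel_meas hs']
  intro t ht
  have hfiber : ∀ d, t ∩ {ω | ω ∈ s (D ω)} ∩ D ⁻¹' {d} = t ∩ D ⁻¹' {d} ∩ s d := by
    intro d; ext ω
    simp only [Set.mem_inter_iff, Set.mem_ofPred_eq, Set.mem_preimage, Set.mem_singleton_iff]
    grind
  have htm : MeasurableSet t := hm t ht
  calc μ (t ∩ {ω | ω ∈ s (D ω)})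
      = ∑' d, μ (t ∩ D ⁻¹' {d} ∩ s d) := by
        rw [measure_eq_tsum_inter_preimage_singleton hDd (htm.inter hsel_meas)]
        simp_rw [hfiber]
    _ = ∑' d, μ (t ∩ D ⁻¹' {d} ∩ s') := tsum_congr fun d =>
        (condExp_indicator_ae_eq_iff hm (hs d) hs').mp (h d) _ (ht.inter (hDm d))
    _ = μ (t ∩ s') := by
        rw [measure_eq_tsum_inter_preimage_singleton hDd (htm.inter hs')]
        simp_rw [Set.inter_right_comm t]

end

theorem ivqr_main_implication_general
    {Ω 𝒳 𝒵 𝒩 : Type*} [mΩ : MeasurableSpace Ω] [StandardBorelSpace Ω]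
    [MeasurableSpace 𝒳]
    [MeasurableSpace 𝒵]
    [MeasurableSpace 𝒩]
    {𝒟 : Type*} [MeasurableSpace 𝒟] [MeasurableSingletonClass 𝒟] [Countable 𝒟]
    (P : Measure Ω) [IsProbabilityMeasure P]
    (X : Ω → 𝒳) (Z : Ω → 𝒵) (ν : Ω → 𝒩)
    (hX : Measurable X) (hZ : Measurable Z) (hν : Measurable ν)
    (U : 𝒟 → Ω → ℝ) (hU : ∀ d, Measurable (U d))
    (q : ℝ → 𝒟 → 𝒳 → ℝ)
    -- potential outcomes `Y_d = q(U_d, d, X)`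
    (Yp : 𝒟 → Ω → ℝ) (hYp : ∀ d ω, Yp d ω = q (U d ω) d (X ω))
    -- A1: conditional on `X`, each `U_d` is uniform on `(0,1)`
    (hA1 : ∀ d : 𝒟, ∀ τ ∈ Set.Icc (0 : ℝ) 1,
      P[(fun ω => if U d ω ≤ τ then (1 : ℝ) else 0)
          | MeasurableSpace.comap X inferInstance] =ᵐ[P] fun _ => τ)
    -- A2: conditional on `X`, each `U_d` is independent of `Z`
    (hA2 : ∀ d : 𝒟,
      CondIndepFun (MeasurableSpace.comap X inferInstance) (hX.comap_le) (U d) Z P)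
    -- A3: selection, `D = δ(Z, X, ν)`, i.e., `D` is `σ(X, Z, ν)`-measurable
    (D : Ω → 𝒟)
    (hA3 : @Measurable Ω 𝒟 (MeasurableSpace.comap (fun ω => (X ω, Z ω, ν ω)) inferInstance) _ D)
    -- A4: rank similarity, conditional on `(X, Z, ν)` the `U_d` are identically distributed
    (hA4 : ∀ d d' : 𝒟, ∀ τ ∈ Set.Icc (0 : ℝ) 1,
      P[(fun ω => if U d ω ≤ τ then (1 : ℝ) else 0)
          | MeasurableSpace.comap (fun ω => (X ω, Z ω, ν ω)) inferInstance]
        =ᵐ[P]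
      P[(fun ω => if U d' ω ≤ τ then (1 : ℝ) else 0)
          | MeasurableSpace.comap (fun ω => (X ω, Z ω, ν ω)) inferInstance])
    -- observed outcome `Y := Y_D`
    (Y : Ω → ℝ) (hY : ∀ ω, Y ω = Yp (D ω) ω) :
    (∀ ω, Y ω = q (U (D ω) ω) (D ω) (X ω)) ∧
    (∀ τ ∈ Set.Icc (0 : ℝ) 1,
      P[(fun ω => if U (D ω) ω ≤ τ then (1 : ℝ) else 0)
          | MeasurableSpace.comap (fun ω => (X ω, Z ω)) inferInstance] =ᵐ[P] fun _ => τ) := by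
  refine ⟨fun ω => by rw [hY, hYp], fun τ hτ => ?_⟩
  obtain ⟨ω₀⟩ := nonempty_of_isProbabilityMeasure P
  have hXZ_le : MeasurableSpace.comap (fun ω => (X ω, Z ω)) inferInstance
      ≤ MeasurableSpace.comap (fun ω => (X ω, Z ω, ν ω)) inferInstance :=
    Measurable.comap_le <| (measurable_fst.prodMk (measurable_fst.comp measurable_snd)).comp
      (comap_measurable _)
  have hXZν_le := (hX.prodMk (hZ.prodMk hν)).comap_le
  have hXZ : MeasurableSpace.comap (fun ω => (X ω, Z ω)) inferInstance
      = MeasurableSpace.comap X inferInstance ⊔ MeasurableSpace.comap Z inferInstance :=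
    MeasurableSpace.comap_prodMk X Z
  have hrank : ∀ d, P⟦U d ⁻¹' Set.Iic τ | MeasurableSpace.comap (fun ω => (X ω, Z ω))
      inferInstance⟧ =ᵐ[P] fun _ => τ := fun d => by
    rw [hXZ]
    refine ((hA2 d).condExp_indicator_sup_comap_ae_eq _ (hU d) hZ measurableSet_Iic).trans ?_
    rw [indicator_preimage_Iic_eq_ite]
    exact hA1 d τ hτ
  have hsel := condExp_indicator_setOf_mem_ae_eq hXZν_le hA3
    (fun d => hU d measurableSet_Iic) (hU (D ω₀) measurableSet_Iic)
    (fun d => by simpa only [indicator_preimage_Iic_eq_ite] using hA4 d (D ω₀) τ hτ)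
  rw [← indicator_preimage_Iic_eq_ite fun ω => U (D ω) ω]
  exact (condExp_ae_eq_of_le_of_ae_eq hXZ_le hXZν_le hsel).trans (hrank (D ω₀))

/-- Theorem 1(i) of the IVQR model (Chernozhukov–Hansen–Wüthrich): under the potential
outcomes representation (A1), conditional independence of ranks and instruments (A2),
the selection representation (A3), and rank similarity (A4), the observed outcome satisfies
`Y = q(U, D, X)` with `U := U_D` uniformly distributed on `(0,1)` conditionally on `(X, Z)`. -/
theorem ivqr_main_implication
    {Ω 𝒳 𝒵 𝒩 : Type*} [mΩ : MeasurableSpace Ω] [StandardBorelSpace Ω] [Nonempty Ω]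
    [MeasurableSpace 𝒳] [StandardBorelSpace 𝒳]
    [MeasurableSpace 𝒵] [StandardBorelSpace 𝒵]
    [MeasurableSpace 𝒩] [StandardBorelSpace 𝒩]
    {𝒟 : Type*} [MeasurableSpace 𝒟] [MeasurableSingletonClass 𝒟] [Countable 𝒟]
    (P : Measure Ω) [IsProbabilityMeasure P]
    (X : Ω → 𝒳) (Z : Ω → 𝒵) (ν : Ω → 𝒩)
    (hX : Measurable X) (hZ : Measurable Z) (hν : Measurable ν)
    (U : 𝒟 → Ω → ℝ) (hU : ∀ d, Measurable (U d))
    (q : ℝ → 𝒟 → 𝒳 → ℝ) (hq : Measurable fun p : ℝ × 𝒟 × 𝒳 => q p.1 p.2.1 p.2.2)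
    -- potential outcomes `Y_d = q(U_d, d, X)`
    (Yp : 𝒟 → Ω → ℝ) (hYp : ∀ d ω, Yp d ω = q (U d ω) d (X ω))
    -- A1: conditional on `X`, each `U_d` is uniform on `(0,1)`
    (hA1 : ∀ d : 𝒟, ∀ τ ∈ Set.Icc (0 : ℝ) 1,
      P[(fun ω => if U d ω ≤ τ then (1 : ℝ) else 0)
          | MeasurableSpace.comap X inferInstance] =ᵐ[P] fun _ => τ)
    -- A2: conditional on `X`, each `U_d` is independent of `Z`
    (hA2 : ∀ d : 𝒟,
      CondIndepFun (MeasurableSpace.comap X inferInstance) (hX.comap_le) (U d) Z P)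
    -- A3: selection, `D = δ(Z, X, ν)`, i.e., `D` is `σ(X, Z, ν)`-measurable
    (D : Ω → 𝒟)
    (hA3 : @Measurable Ω 𝒟 (MeasurableSpace.comap (fun ω => (X ω, Z ω, ν ω)) inferInstance) _ D)
    -- A4: rank similarity, conditional on `(X, Z, ν)` the `U_d` are identically distributed
    (hA4 : ∀ d d' : 𝒟, ∀ τ ∈ Set.Icc (0 : ℝ) 1,
      P[(fun ω => if U d ω ≤ τ then (1 : ℝ) else 0)
          | MeasurableSpace.comap (fun ω => (X ω, Z ω, ν ω)) inferInstance]
        =ᵐ[P]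
      P[(fun ω => if U d' ω ≤ τ then (1 : ℝ) else 0)
          | MeasurableSpace.comap (fun ω => (X ω, Z ω, ν ω)) inferInstance])
    -- observed outcome `Y := Y_D`
    (Y : Ω → ℝ) (hY : ∀ ω, Y ω = Yp (D ω) ω) :
    (∀ ω, Y ω = q (U (D ω) ω) (D ω) (X ω)) ∧
    (∀ τ ∈ Set.Icc (0 : ℝ) 1,
      P[(fun ω => if U (D ω) ω ≤ τ then (1 : ℝ) else 0)
          | MeasurableSpace.comap (fun ω => (X ω, Z ω)) inferInstance] =ᵐ[P] fun _ => τ) :=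
  ivqr_main_implication_general (mΩ := mΩ) P X Z ν hX hZ hν U hU q Yp hYp hA1 hA2 D hA3 hA4 Y hY
end

section
/- Let (Ω, ℱ, P) be a probability space, and let Y : Ω → ℝ, U : Ω → ℝ, D : Ω → 𝒟, X : Ω → 𝒳, Z : Ω → 𝒵 be measurable random elements (𝒟, 𝒳, 𝒵 measurable spaces). Let q : ℝ × 𝒟 × 𝒳 → ℝ be measurable and suppose that for every d ∈ 𝒟 and x ∈ 𝒳 the map t ↦ q(t, d, x) is strictly increasing on [0,1]. Assume Y = q(U, D, X) P-a.s., U ∈ [0,1] P-a.s., and for every t ∈ [0,1], E[1{U ≤ t} | σ(X, Z)] = t P-a.s. Then for each τ ∈ (0,1), E[1{Y ≤ q(τ, D, X)} | σ(X, Z)] = τ P-almost surely. -/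
open MeasureTheory

theorem ae_comp_le_iff_of_strictMonoOn {Ω α β : Type*} [MeasurableSpace Ω] {μ : Measure Ω}
    [LinearOrder α] [Preorder β] {s : Set α} {g : Ω → α → β} (hg : ∀ ω, StrictMonoOn (g ω) s)
    {U : Ω → α} (hU : ∀ᵐ ω ∂μ, U ω ∈ s) {t : α} (ht : t ∈ s) :
    ∀ᵐ ω ∂μ, (g ω (U ω) ≤ g ω t ↔ U ω ≤ t) := by
  filter_upwards [hU] with ω hω
  exact (hg ω).le_iff_le hω ht

theorem ivqr_conditional_moment_restriction_general
    {Ω 𝒟 𝒳 𝒵 : Type*} [MeasurableSpace Ω] [MeasurableSpace 𝒳]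
    [MeasurableSpace 𝒵]
    (P : Measure Ω)
    (Y U : Ω → ℝ) (D : Ω → 𝒟) (X : Ω → 𝒳) (Z : Ω → 𝒵)
    (q : ℝ → 𝒟 → 𝒳 → ℝ)
    (hmono : ∀ (d : 𝒟) (x : 𝒳), StrictMonoOn (fun t => q t d x) (Set.Icc (0 : ℝ) 1))
    (hrep : ∀ᵐ ω ∂P, Y ω = q (U ω) (D ω) (X ω))
    (hU01 : ∀ᵐ ω ∂P, U ω ∈ Set.Icc (0 : ℝ) 1)
    (hunif : ∀ t ∈ Set.Icc (0 : ℝ) 1,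
      P[(fun ω => if U ω ≤ t then (1 : ℝ) else 0)
          | MeasurableSpace.comap (fun ω => (X ω, Z ω)) inferInstance] =ᵐ[P] fun _ => t)
    (τ : ℝ) (hτ : τ ∈ Set.Ioo (0 : ℝ) 1) :
    P[(fun ω => if Y ω ≤ q τ (D ω) (X ω) then (1 : ℝ) else 0)
        | MeasurableSpace.comap (fun ω => (X ω, Z ω)) inferInstance] =ᵐ[P] fun _ => τ := by
  have hτ_mem : τ ∈ Set.Icc (0 : ℝ) 1 := Set.Ioo_subset_Icc_self hτ
  have h_events : (fun ω => if Y ω ≤ q τ (D ω) (X ω) then (1 : ℝ) else 0)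
      =ᵐ[P] fun ω => if U ω ≤ τ then (1 : ℝ) else 0 := by
    filter_upwards [hrep, ae_comp_le_iff_of_strictMonoOn (fun ω => hmono (D ω) (X ω)) hU01 hτ_mem]
      with ω hY_eq h_iff
    simp only [hY_eq, h_iff]
  exact (condExp_congr_ae h_events).trans (hunif τ hτ_mem)

/-- Theorem 1(ii) of the IVQR model: if `Y = q(U, D, X)` a.s. with `U` uniform on `(0,1)`
conditionally on `(X, Z)` and `t ↦ q(t, d, x)` strictly increasing on `[0,1]`, then the
conditional moment restriction `P[Y ≤ q(τ, D, X) | X, Z] = τ` holds for each `τ ∈ (0,1)`. -/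
theorem ivqr_conditional_moment_restriction
    {Ω 𝒟 𝒳 𝒵 : Type*} [MeasurableSpace Ω] [MeasurableSpace 𝒟] [MeasurableSpace 𝒳]
    [MeasurableSpace 𝒵]
    (P : Measure Ω) [IsProbabilityMeasure P]
    (Y U : Ω → ℝ) (D : Ω → 𝒟) (X : Ω → 𝒳) (Z : Ω → 𝒵)
    (hY : Measurable Y) (hU : Measurable U) (hD : Measurable D)
    (hX : Measurable X) (hZ : Measurable Z)
    (q : ℝ → 𝒟 → 𝒳 → ℝ) (hq : Measurable fun p : ℝ × 𝒟 × 𝒳 => q p.1 p.2.1 p.2.2)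
    (hmono : ∀ (d : 𝒟) (x : 𝒳), StrictMonoOn (fun t => q t d x) (Set.Icc (0 : ℝ) 1))
    (hrep : ∀ᵐ ω ∂P, Y ω = q (U ω) (D ω) (X ω))
    (hU01 : ∀ᵐ ω ∂P, U ω ∈ Set.Icc (0 : ℝ) 1)
    (hunif : ∀ t ∈ Set.Icc (0 : ℝ) 1,
      P[(fun ω => if U ω ≤ t then (1 : ℝ) else 0)
          | MeasurableSpace.comap (fun ω => (X ω, Z ω)) inferInstance] =ᵐ[P] fun _ => t)
    (τ : ℝ) (hτ : τ ∈ Set.Ioo (0 : ℝ) 1) :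
    P[(fun ω => if Y ω ≤ q τ (D ω) (X ω) then (1 : ℝ) else 0)
        | MeasurableSpace.comap (fun ω => (X ω, Z ω)) inferInstance] =ᵐ[P] fun _ => τ :=
  ivqr_conditional_moment_restriction_general P Y U D X Z q hmono hrep hU01 hunif τ hτ
end

section
/- Let (Ω, ℱ, P) be a probability space, and let Y : Ω → ℝ, U : Ω → ℝ, D : Ω → 𝒟, X : Ω → 𝒳, Z : Ω → 𝒵 be measurable random elements. Let q : ℝ × 𝒟 × 𝒳 → ℝ be measurable with t ↦ q(t, d, x) nondecreasing on [0,1] for every (d, x). Assume Y = q(U, D, X) P-a.s., U ∈ [0,1] P-a.s., and for every Borel set B ⊆ ℝ, E[1{U ∈ B} | σ(X, Z)] = λ(B ∩ [0,1]) P-a.s., where λ is Lebesgue measure. Let I ⊆ [0,1] be a closed set and suppose the event A_I := {ω ∈ Ω : ∃ t ∈ I, Y(ω) = q(t, D(ω), X(ω))} (i.e., Y ∈ q(I, D, X), the image of I under t ↦ q(t, D, X)) is ℱ-measurable. Then P(U ∈ I) ≤ E[1_{A_I} | σ(X, Z)] P-almost surely. -/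
open MeasureTheory
open scoped Classical

/-!
Since `Y = q(U, D, X)` a.s., the event `{U ∈ I}` is a.s. contained in `A_I`, so by monotonicity
of conditional expectation `P[U ∈ I | X, Z] ≤ P[A_I | X, Z]`. The left side is a.s. the constant
`λ(I)`, and integrating it shows that this constant is `P(U ∈ I)`.
-/

section CondExpIndicator

variable {Ω : Type*} {m m₀ : MeasurableSpace Ω} {μ : Measure Ω}

theorem condExp_indicator_one_mono [IsFiniteMeasure μ] {s t : Set Ω} (hs : MeasurableSet s)
    (ht : MeasurableSet t) (hst : s ≤ᵐ[μ] t) :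
    μ[s.indicator (1 : Ω → ℝ) | m] ≤ᵐ[μ] μ[t.indicator 1 | m] := by
  refine condExp_mono ((integrable_const 1).indicator hs) ((integrable_const 1).indicator ht) ?_
  filter_upwards [hst] with ω hω
  by_cases h : ω ∈ s
  · rw [Set.indicator_of_mem h, Set.indicator_of_mem (hω h)]
  · rw [Set.indicator_of_notMem h]
    exact Set.indicator_nonneg (fun _ _ => zero_le_one) ω

theorem measureReal_eq_of_condExp_indicator_ae_eq_const [IsProbabilityMeasure μ] (hm : m ≤ m₀)
    {s : Set Ω} (hs : MeasurableSet s) {c : ℝ}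
    (hc : μ[s.indicator (1 : Ω → ℝ) | m] =ᵐ[μ] fun _ => c) :
    μ.real s = c :=
  calc μ.real s = ∫ ω, s.indicator 1 ω ∂μ := (integral_indicator_one hs).symm
    _ = ∫ ω, (μ[s.indicator 1 | m]) ω ∂μ := (integral_condExp hm).symm
    _ = c := by simp [integral_congr_ae hc]

end CondExpIndicator

theorem ivqr_closed_set_inequality_general
    {Ω 𝒟 𝒳 𝒵 : Type*} [MeasurableSpace Ω] [MeasurableSpace 𝒟] [MeasurableSpace 𝒳]
    [MeasurableSpace 𝒵]
    (P : Measure Ω) [IsProbabilityMeasure P]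
    (Y U : Ω → ℝ) (D : Ω → 𝒟) (X : Ω → 𝒳) (Z : Ω → 𝒵)
    (hU : Measurable U)
    (hX : Measurable X) (hZ : Measurable Z)
    (q : ℝ → 𝒟 → 𝒳 → ℝ)
    (hrep : ∀ᵐ ω ∂P, Y ω = q (U ω) (D ω) (X ω))
    (hunif : ∀ B : Set ℝ, MeasurableSet B →
      P[(fun ω => if U ω ∈ B then (1 : ℝ) else 0)
          | MeasurableSpace.comap (fun ω => (X ω, Z ω)) inferInstance]
        =ᵐ[P] fun _ => (MeasureTheory.volume (B ∩ Set.Icc (0 : ℝ) 1)).toReal)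
    (I : Set ℝ) (hI : IsClosed I)
    (hAI : MeasurableSet {ω : Ω | ∃ t ∈ I, Y ω = q t (D ω) (X ω)}) :
    ∀ᵐ ω ∂P, (P {ω' : Ω | U ω' ∈ I}).toReal ≤
      (P[(fun ω' => if ∃ t ∈ I, Y ω' = q t (D ω') (X ω') then (1 : ℝ) else 0)
          | MeasurableSpace.comap (fun ω' => (X ω', Z ω')) inferInstance]) ω := by
  have hUI : MeasurableSet {ω | U ω ∈ I} := hU hI.measurableSet
  have hsub : {ω | U ω ∈ I} ≤ᵐ[P] {ω | ∃ t ∈ I, Y ω = q t (D ω) (X ω)} := by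
    filter_upwards [hrep] with ω hω hmem using ⟨U ω, hmem, hω⟩
  have hconst := hunif I hI.measurableSet
  have hmeas := measureReal_eq_of_condExp_indicator_ae_eq_const
    (hX.prodMk hZ).comap_le hUI hconst
  filter_upwards [condExp_indicator_one_mono hUI hAI hsub, hconst] with ω hle hc
  change P.real _ ≤ _
  rw [hmeas, ← hc]
  exact hle

/-- Theorem 1(iii) of the IVQR model (outcomes possibly with atoms): if `Y = q(U, D, X)` a.s.
with `U` uniform on `(0,1)` conditionally on `(X, Z)` and `t ↦ q(t, d, x)` only nondecreasing
on `[0,1]`, then for any closed set `I ⊆ [0,1]`,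
`P(U ∈ I) ≤ P[Y ∈ q(I, D, X) | X, Z]` almost surely. -/
theorem ivqr_closed_set_inequality
    {Ω 𝒟 𝒳 𝒵 : Type*} [MeasurableSpace Ω] [MeasurableSpace 𝒟] [MeasurableSpace 𝒳]
    [MeasurableSpace 𝒵]
    (P : Measure Ω) [IsProbabilityMeasure P]
    (Y U : Ω → ℝ) (D : Ω → 𝒟) (X : Ω → 𝒳) (Z : Ω → 𝒵)
    (hY : Measurable Y) (hU : Measurable U) (hD : Measurable D)
    (hX : Measurable X) (hZ : Measurable Z)
    (q : ℝ → 𝒟 → 𝒳 → ℝ) (hq : Measurable fun p : ℝ × 𝒟 × 𝒳 => q p.1 p.2.1 p.2.2)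
    (hmono : ∀ (d : 𝒟) (x : 𝒳), MonotoneOn (fun t => q t d x) (Set.Icc (0 : ℝ) 1))
    (hrep : ∀ᵐ ω ∂P, Y ω = q (U ω) (D ω) (X ω))
    (hU01 : ∀ᵐ ω ∂P, U ω ∈ Set.Icc (0 : ℝ) 1)
    (hunif : ∀ B : Set ℝ, MeasurableSet B →
      P[(fun ω => if U ω ∈ B then (1 : ℝ) else 0)
          | MeasurableSpace.comap (fun ω => (X ω, Z ω)) inferInstance]
        =ᵐ[P] fun _ => (MeasureTheory.volume (B ∩ Set.Icc (0 : ℝ) 1)).toReal)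
    (I : Set ℝ) (hI : IsClosed I) (hI01 : I ⊆ Set.Icc (0 : ℝ) 1)
    (hAI : MeasurableSet {ω : Ω | ∃ t ∈ I, Y ω = q t (D ω) (X ω)}) :
    ∀ᵐ ω ∂P, (P {ω' : Ω | U ω' ∈ I}).toReal ≤
      (P[(fun ω' => if ∃ t ∈ I, Y ω' = q t (D ω') (X ω') then (1 : ℝ) else 0)
          | MeasurableSpace.comap (fun ω' => (X ω', Z ω')) inferInstance]) ω :=
  ivqr_closed_set_inequality_general P Y U D X Z hU hX hZ q hrep hunif I hI hAI
end
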